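/- Let P be a finite poset, v ∈ P, and let v₁, …, v_k be the elements of P covered by v. Define T_v* = ε_{v₁} ∘ ε_{v₂} ∘ ⋯ ∘ ε_{v_k} ∘ τ_v ∘ τ_{v_k} ∘ ⋯ ∘ τ_{v₂} ∘ τ_{v₁} and E_v* = ε_{v₁} ∘ ε_{v₂} ∘ ⋯ ∘ ε_{v_k} ∘ ε_v ∘ τ_{v_k} ∘ ⋯ ∘ τ_{v₂} ∘ τ_{v₁} (with T_v* = τ_v and E_v* = ε_v when v is minimal). Then Θ ∘ Δ⁻¹ ∘ T_v* = T_v ∘ Θ ∘ Δ⁻¹ and Θ ∘ Δ⁻¹ ∘ E_v* = E_v ∘ Θ ∘ Δ⁻¹, on all S-labelings for which both sides are defined (i.e., every element inverted in the computation is nonzero). -/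

import Mathlib

/-!
Noncommutative (skew field) antichain/order toggling and rowmotion on a finite poset `P`,
with labels in a division ring `S` and a fixed central element `C`, following
Joseph–Roby, "Birational and noncommutative lifts of antichain toggling and rowmotion".
All maps are partial; definedness ("every element inverted in the computation is
nonzero") is recorded by explicit predicates.
-/

open Finset

attribute [local instance] Classical.propDecidable

variable {P : Type*} [Fintype P] [PartialOrder P] {S : Type*} [DivisionRing S]

/-- `c` is a saturated chain in `P`: consecutive entries are covers. -/
def SatChain {P : Type*} [PartialOrder P] {k : ℕ} (c : Fin (k + 1) → P) : Prop :=
  ∀ i : Fin k, c i.castSucc ⋖ c i.succ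

/-- `c` is a maximal chain of `P`: a saturated chain from a minimal element to a maximal
element of `P` (equivalently, the restriction to `P` of a maximal chain
`0̂ ⋖ y₁ ⋖ ⋯ ⋖ y_k ⋖ 1̂` of `P̂`). -/
def MaxChain {P : Type*} [PartialOrder P] {k : ℕ} (c : Fin (k + 1) → P) : Prop :=
  SatChain c ∧ IsMin (c 0) ∧ IsMax (c (Fin.last k))

/-- `∑_{u ∈ P̂, u ⋖ v} f(u)`, with the convention `f(0̂) = 1`. -/
noncomputable def lSum (f : P → S) (v : P) : S :=
  (if IsMin v then 1 else 0) + ∑ u ∈ univ.filter (fun u => u ⋖ v), f u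

/-- `∑_{u ∈ P̂, u ⋗ v} f(u)⁻¹`, with the convention `f(1̂) = C`; its inverse is the
parallel sum `⫲_{u ∈ P̂, u ⋗ v} f(u)` (where `x ⫲ y = (x⁻¹ + y⁻¹)⁻¹`). -/
noncomputable def uInvSum (C : S) (f : P → S) (v : P) : S :=
  (if IsMax v then C⁻¹ else 0) + ∑ u ∈ univ.filter (fun u => v ⋖ u), (f u)⁻¹

/-- The noncommutative order toggle `T_v`: it replaces the label at `v` by
`(∑_{u ∈ P̂, u ⋖ v} f(u)) · f(v)⁻¹ · (⫲_{u ∈ P̂, u ⋗ v} f(u))` and fixes all other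
labels. -/
noncomputable def ncT (C : S) (v : P) (f : P → S) : P → S :=
  fun x => if x = v then lSum f v * (f v)⁻¹ * (uInvSum C f v)⁻¹ else f x

/-- The noncommutative order elggot `E_v`: it replaces the label at `v` by
`(⫲_{u ∈ P̂, u ⋗ v} f(u)) · f(v)⁻¹ · (∑_{u ∈ P̂, u ⋖ v} f(u))` and fixes all other
labels. -/
noncomputable def ncE (C : S) (v : P) (f : P → S) : P → S :=
  fun x => if x = v then (uInvSum C f v)⁻¹ * (f v)⁻¹ * lSum f v else f x

/-- Definedness of one application of `T_v` or `E_v` to `f`: every element inverted in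
the computation (the label `f(v)`, the labels `f(u)` of the upper covers `u` of `v` in
`P̂`, and the sum of their inverses) is nonzero. -/
def ncODef (C : S) (v : P) (f : P → S) : Prop :=
  f v ≠ 0 ∧ (∀ u : P, v ⋖ u → f u ≠ 0) ∧ (IsMax v → C ≠ 0) ∧ uInvSum C f v ≠ 0

/-- The element `∑ g(y_{c-1})⋯g(y₁) · g(y_k)⋯g(y_c)` inverted by the noncommutative
antichain toggle `τ_v`, summed over all maximal chains `0̂ ⋖ y₁ ⋖ ⋯ ⋖ y_k ⋖ 1̂` of `P̂`
with `y_c = v` (indices decrease by 1 within each factor). -/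
noncomputable def tauDenom (g : P → S) (v : P) : S :=
  ∑ k ∈ range (Fintype.card P),
    ∑ c ∈ univ.filter (fun c : Fin (k + 1) → P => MaxChain c),
      ∑ j ∈ univ.filter (fun j : Fin (k + 1) => c j = v),
        (((List.ofFn (g ∘ c)).take j.1).reverse).prod *
          (((List.ofFn (g ∘ c)).drop j.1).reverse).prod

/-- The element `∑ g(y_c)⋯g(y₁) · g(y_k)⋯g(y_{c+1})` inverted by the noncommutative
antichain elggot `ε_v`, summed over all maximal chains `0̂ ⋖ y₁ ⋖ ⋯ ⋖ y_k ⋖ 1̂` of `P̂`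
with `y_c = v`. -/
noncomputable def epsDenom (g : P → S) (v : P) : S :=
  ∑ k ∈ range (Fintype.card P),
    ∑ c ∈ univ.filter (fun c : Fin (k + 1) → P => MaxChain c),
      ∑ j ∈ univ.filter (fun j : Fin (k + 1) => c j = v),
        (((List.ofFn (g ∘ c)).take (j.1 + 1)).reverse).prod *
          (((List.ofFn (g ∘ c)).drop (j.1 + 1)).reverse).prod

/-- The noncommutative antichain toggle `τ_v`: it replaces the label at `v` by
`C · (∑ g(y_{c-1})⋯g(y₁) · g(y_k)⋯g(y_c))⁻¹` and fixes all other labels. -/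
noncomputable def ncTau (C : S) (v : P) (g : P → S) : P → S :=
  fun x => if x = v then C * (tauDenom g v)⁻¹ else g x

/-- The noncommutative antichain elggot `ε_v`: it replaces the label at `v` by
`C · (∑ g(y_c)⋯g(y₁) · g(y_k)⋯g(y_{c+1}))⁻¹` and fixes all other labels. -/
noncomputable def ncEps (C : S) (v : P) (g : P → S) : P → S :=
  fun x => if x = v then C * (epsDenom g v)⁻¹ else g x

/-- The noncommutative complement `Θ`: `(Θf)(x) = C · f(x)⁻¹`. -/
noncomputable def ncTheta (C : S) (f : P → S) : P → S := fun x => C * (f x)⁻¹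

/-- The noncommutative down transfer `∇`:
`(∇f)(x) = f(x) · (∑_{y ∈ P̂, y ⋖ x} f(y))⁻¹` with `f(0̂) = 1`. -/
noncomputable def ncNabla (f : P → S) : P → S := fun x => f x * (lSum f x)⁻¹

/-- The noncommutative inverse up transfer `Δ⁻¹`:
`(Δ⁻¹f)(x) = ∑ f(y_k)⋯f(y₂)f(y₁)` over all saturated chains
`x = y₁ ⋖ y₂ ⋖ ⋯ ⋖ y_k ⋖ 1̂` in `P̂`. -/
noncomputable def ncDeltaInv (f : P → S) : P → S := fun x =>
  ∑ k ∈ range (Fintype.card P),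
    ∑ c ∈ univ.filter (fun c : Fin (k + 1) → P =>
        SatChain c ∧ c 0 = x ∧ IsMax (c (Fin.last k))),
      ((List.ofFn (f ∘ c)).reverse).prod

/-- The noncommutative inverse down transfer `∇⁻¹`:
`(∇⁻¹f)(x) = ∑ f(y_k)⋯f(y₂)f(y₁)` over all saturated chains
`0̂ ⋖ y₁ ⋖ y₂ ⋖ ⋯ ⋖ y_k = x` in `P̂`. -/
noncomputable def ncNablaInv (f : P → S) : P → S := fun x =>
  ∑ k ∈ range (Fintype.card P),
    ∑ c ∈ univ.filter (fun c : Fin (k + 1) → P =>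
        SatChain c ∧ IsMin (c 0) ∧ c (Fin.last k) = x),
      ((List.ofFn (f ∘ c)).reverse).prod

/-- `l` is a linear extension of `P`: it lists every element of `P` exactly once, and
`l[i] < l[j]` in `P` implies `i < j`. -/
def IsLinearExtension {P : Type*} [PartialOrder P] (l : List P) : Prop :=
  l.Nodup ∧ (∀ x : P, x ∈ l) ∧
    ∀ (i j : ℕ) (hi : i < l.length) (hj : j < l.length), l[i]'hi < l[j]'hj → i < j

/-- `l` is a linear extension of the subposet `A` of `P`. -/
def IsLinearExtensionOn {P : Type*} [PartialOrder P] (A : Set P) (l : List P) : Prop :=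
  l.Nodup ∧ (∀ x : P, x ∈ l ↔ x ∈ A) ∧
    ∀ (i j : ℕ) (hi : i < l.length) (hj : j < l.length), l[i]'hi < l[j]'hj → i < j

/-- Apply the noncommutative antichain toggles `τ` along a list, first element first. -/
noncomputable def applyNCTaus (C : S) (l : List P) (g : P → S) : P → S :=
  l.foldl (fun h v => ncTau C v h) g

/-- Apply the noncommutative antichain elggots `ε` along a list, first element first. -/
noncomputable def applyNCEpss (C : S) (l : List P) (g : P → S) : P → S :=
  l.foldl (fun h v => ncEps C v h) g

/-- Stepwise definedness of applying the antichain toggles `τ` along a list. -/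
def ncTausDef (C : S) : List P → (P → S) → Prop
  | [], _ => True
  | v :: l, g => tauDenom g v ≠ 0 ∧ ncTausDef C l (ncTau C v g)

/-- Stepwise definedness of applying the antichain elggots `ε` along a list. -/
def ncEpssDef (C : S) : List P → (P → S) → Prop
  | [], _ => True
  | v :: l, g => epsDenom g v ≠ 0 ∧ ncEpssDef C l (ncEps C v g)

/-!
Chains of `P̂` are encoded as lists of elements of `P` and weighted by the reversed product of
their labels. Cutting a maximal chain at `v` gives `tauDenom h v = L · U · h v` and
`epsDenom h v = h v · L · U`, where `L = lowerSum h v` sums over the chains from `0̂` to a lower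
cover of `v` and `U = upperSum h v` over the chains from an upper cover of `v` to `1̂`; likewise
`Δ⁻¹h(v) = U · h v` and `∇⁻¹h(v) = h v · L`.

Toggles at pairwise incomparable elements do not interact, since each of them only reads labels
of comparable elements. After the `τ`'s at the lower covers `vᵢ` of `v` one has `∇⁻¹ = ΘΔ⁻¹g` at
each `vᵢ`, and after the final `ε`'s one has `Δ⁻¹ = Θ∇⁻¹ = Δ⁻¹g` there again. As the `vᵢ` separate
`v` from everything below it, `Δ⁻¹` of the result agrees with `Δ⁻¹g` away from `v`, and at `v` it
is `U · t` for the new label `t` at `v`; comparing with `T_v` and `E_v` at `v` is then a short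
computation in which `C` is central.
-/

section Lists

variable {α : Type*}

lemma head?_ofFn_succ {k : ℕ} (c : Fin (k + 1) → α) : (List.ofFn c).head? = some (c 0) := by
  simp [List.ofFn_succ]

lemma getLast?_ofFn_succ {k : ℕ} (c : Fin (k + 1) → α) :
    (List.ofFn c).getLast? = some (c (Fin.last k)) := by
  rw [List.ofFn_succ_last]
  simp

def chainWeight {M : Type*} [Monoid M] (h : α → M) (l : List α) : M := (l.map h).reverse.prod

@[simp]
lemma chainWeight_nil {M : Type*} [Monoid M] (h : α → M) : chainWeight h [] = 1 := rfl

@[simp]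
lemma chainWeight_cons {M : Type*} [Monoid M] (h : α → M) (x : α) (l : List α) :
    chainWeight h (x :: l) = chainWeight h l * h x := by
  simp [chainWeight]

@[simp]
lemma chainWeight_append {M : Type*} [Monoid M] (h : α → M) (l₁ l₂ : List α) :
    chainWeight h (l₁ ++ l₂) = chainWeight h l₂ * chainWeight h l₁ := by
  simp [chainWeight]

lemma chainWeight_congr {M : Type*} [Monoid M] {h h' : α → M} {l : List α}
    (hl : ∀ y ∈ l, h y = h' y) : chainWeight h l = chainWeight h' l := by
  simp [chainWeight, List.map_congr_left hl]

variable [Fintype α] {β : Type*} [AddCommMonoid β]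

-- Every chain of a finite poset is one of these lists.
variable (α) in
noncomputable def shortLists : Finset (List α) :=
  (List.finite_length_le α (Fintype.card α)).toFinset

@[simp]
lemma mem_shortLists {l : List α} : l ∈ shortLists α ↔ l.length ≤ Fintype.card α := by
  simp [shortLists]

lemma sum_range_sum_eq_sum_shortLists (F : ∀ k : ℕ, (Fin (k + 1) → α) → β)
    (G : List α → β) (hG : G [] = 0) (hFG : ∀ k c, F k c = G (List.ofFn c)) :
    ∑ k ∈ range (Fintype.card α), ∑ c, F k c = ∑ l ∈ shortLists α, G l := by
  simp_rw [hFG]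
  rw [Finset.sum_sigma', ← Finset.sum_erase _ hG]
  refine Finset.sum_bij (fun p _ => List.ofFn p.2) (fun p hp => ?_) (fun p _ q _ hpq => ?_)
    (fun l hl => ?_) fun _ _ => rfl
  · simp only [Finset.mem_sigma, Finset.mem_range] at hp
    refine Finset.mem_erase.2 ⟨by simp, mem_shortLists.2 ?_⟩
    rw [List.length_ofFn]
    exact hp.1
  · obtain ⟨hk, hc⟩ := Sigma.mk.inj_iff.1 (List.ofFn_inj'.1 hpq)
    obtain ⟨k, c⟩ := p
    obtain ⟨k', c'⟩ := q
    obtain rfl : k = k' := by simpa using hk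
    simpa using hc
  · obtain ⟨hl0, hln⟩ := Finset.mem_erase.1 hl
    obtain ⟨k, hk⟩ := Nat.exists_eq_add_one_of_ne_zero (List.length_pos_iff.2 hl0).ne'
    refine ⟨⟨k, fun i => l[i.1]⟩, ?_,
      List.ext_getElem (by simp [hk]) fun i _ _ => List.getElem_ofFn ..⟩
    simp only [Finset.mem_sigma, Finset.mem_range, Finset.mem_univ, and_true]
    rw [mem_shortLists] at hln
    omega

lemma sum_shortLists_head?_eq_some {p : List α → Prop} [DecidablePred p]
    (hp : ∀ l, p l → l.length ≤ Fintype.card α) (x : α) (G : List α → β) :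
    ∑ l ∈ shortLists α, (if l.head? = some x ∧ p l then G l else 0)
      = ∑ l ∈ shortLists α, if p (x :: l) then G (x :: l) else 0 := by
  rw [← Finset.sum_filter, ← Finset.sum_filter]
  refine Finset.sum_nbij' List.tail (x :: ·) (fun l hl => ?_) (fun l hl => ?_) (fun l hl => ?_)
    (fun l _ => rfl) fun l hl => ?_
  all_goals simp only [Finset.mem_filter, mem_shortLists] at hl
  · obtain ⟨-, hx, hpl⟩ := hl
    obtain ⟨l, rfl⟩ := List.head?_eq_some_iff.1 hx
    simpa using ⟨(hp _ hpl).trans' (by simp), hpl⟩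
  · simpa using ⟨hp _ hl.2, hl.2⟩
  · obtain ⟨l, rfl⟩ := List.head?_eq_some_iff.1 hl.2.1
    rfl
  · obtain ⟨l, rfl⟩ := List.head?_eq_some_iff.1 hl.2.1
    rfl

lemma sum_shortLists_getLast?_eq_some {p : List α → Prop} [DecidablePred p]
    (hp : ∀ l, p l → l.length ≤ Fintype.card α) (x : α) (G : List α → β) :
    ∑ l ∈ shortLists α, (if l.getLast? = some x ∧ p l then G l else 0)
      = ∑ l ∈ shortLists α, if p (l ++ [x]) then G (l ++ [x]) else 0 := by
  rw [← Finset.sum_filter, ← Finset.sum_filter]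
  refine Finset.sum_nbij' List.dropLast (· ++ [x]) (fun l hl => ?_) (fun l hl => ?_)
    (fun l hl => ?_) (fun l _ => by simp) fun l hl => ?_
  all_goals simp only [Finset.mem_filter, mem_shortLists] at hl
  · obtain ⟨-, hx, hpl⟩ := hl
    obtain ⟨l, rfl⟩ := List.getLast?_eq_some_iff.1 hx
    simpa using ⟨(hp _ hpl).trans' (by simp), hpl⟩
  · simpa using ⟨by simpa using hp _ hl.2, hl.2⟩
  · obtain ⟨l, rfl⟩ := List.getLast?_eq_some_iff.1 hl.2.1
    simp
  · obtain ⟨l, rfl⟩ := List.getLast?_eq_some_iff.1 hl.2.1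
    simp

lemma sum_shortLists_getElem?_eq_some {p : List α → Prop} [DecidablePred p]
    (hp : ∀ l, p l → l.length ≤ Fintype.card α) (v : α) (F : List α → List α → β) :
    ∑ l ∈ shortLists α, ∑ j ∈ range l.length,
        (if l[j]? = some v ∧ p l then F (l.take j) (l.drop (j + 1)) else 0)
      = ∑ l₁ ∈ shortLists α, ∑ l₂ ∈ shortLists α,
          if p (l₁ ++ v :: l₂) then F l₁ l₂ else 0 := by
  rw [Finset.sum_sigma', ← Finset.sum_product', ← Finset.sum_filter, ← Finset.sum_filter]
  refine Finset.sum_nbij' (fun q => (q.1.take q.2, q.1.drop (q.2 + 1)))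
    (fun q => ⟨q.1 ++ v :: q.2, q.1.length⟩) (fun ⟨l, j⟩ hq => ?_)
    (fun ⟨l₁, l₂⟩ hq => ?_) (fun ⟨l, j⟩ hq => ?_) (fun q _ => by simp) fun q _ => rfl
  all_goals simp only [Finset.mem_filter, Finset.mem_sigma, Finset.mem_product, mem_shortLists,
    Finset.mem_range] at hq ⊢
  · obtain ⟨⟨hl, -⟩, hv, hpl⟩ := hq
    obtain ⟨hj, rfl⟩ := List.getElem?_eq_some_iff.1 hv
    rw [List.getElem_cons_drop, List.take_append_drop]
    exact ⟨⟨(List.length_take_le' _ _).trans hl, by rw [List.length_drop]; omega⟩, hpl⟩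
  · exact ⟨⟨by simpa using hp _ hq.2, by simp⟩, by simp, hq.2⟩
  · obtain ⟨⟨hl, -⟩, hv, hpl⟩ := hq
    obtain ⟨hj, rfl⟩ := List.getElem?_eq_some_iff.1 hv
    simp [List.getElem_cons_drop, hj.le]

lemma sum_shortLists_eq_add_sum_head? (G : List α → β) :
    ∑ l ∈ shortLists α, G l
      = G [] + ∑ x, ∑ l ∈ shortLists α, if l.head? = some x then G l else 0 := by
  rw [← Finset.sum_fiberwise (shortLists α) List.head? G, Fintype.sum_option]
  simp [Finset.sum_filter]

lemma sum_shortLists_eq_add_sum_getLast? (G : List α → β) :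
    ∑ l ∈ shortLists α, G l
      = G [] + ∑ x, ∑ l ∈ shortLists α, if l.getLast? = some x then G l else 0 := by
  rw [← Finset.sum_fiberwise (shortLists α) List.getLast? G, Fintype.sum_option]
  simp [Finset.sum_filter]

end Lists

section Chains

variable {α : Type*} [PartialOrder α]

-- `l` followed by `1̂` is a saturated chain of `P̂`.
def IsChainToTop (l : List α) : Prop := l.IsChain (· ⋖ ·) ∧ ∀ y ∈ l.getLast?, IsMax y

-- `0̂` followed by `l` is a saturated chain of `P̂`.
def IsChainFromBot (l : List α) : Prop := l.IsChain (· ⋖ ·) ∧ ∀ y ∈ l.head?, IsMin y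

lemma length_le_card_of_isChain [Fintype α] {l : List α} (hl : l.IsChain (· ⋖ ·)) :
    l.length ≤ Fintype.card α :=
  List.Nodup.length_le_card <|
    (List.isChain_iff_pairwise.1 (hl.imp fun _ _ => CovBy.lt)).imp ne_of_lt

lemma satChain_iff_isChain_ofFn {k : ℕ} (c : Fin (k + 1) → α) :
    SatChain c ↔ (List.ofFn c).IsChain (· ⋖ ·) := by
  rw [List.isChain_ofFn, SatChain, Fin.forall_iff]
  simp [Fin.castSucc, Fin.succ]

lemma maxChain_iff_ofFn {k : ℕ} (c : Fin (k + 1) → α) :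
    MaxChain c ↔ IsChainFromBot (List.ofFn c) ∧ IsChainToTop (List.ofFn c) := by
  simp only [MaxChain, IsChainFromBot, IsChainToTop, satChain_iff_isChain_ofFn, head?_ofFn_succ,
    getLast?_ofFn_succ, Option.mem_def, Option.some.injEq, forall_eq']
  tauto

lemma pairwise_incompRel_of_covBy {v : α} {l : List α} (hnd : l.Nodup)
    (hl : ∀ y ∈ l, y ⋖ v) : l.Pairwise (IncompRel (· ≤ ·)) := by
  refine hnd.pairwise_of_forall_ne fun a ha b hb hab => ⟨fun hle => ?_, fun hle => ?_⟩
  · exact (hl a ha).2 (hle.lt_of_ne hab) (hl b hb).1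
  · exact (hl b hb).2 (hle.lt_of_ne hab.symm) (hl a ha).1

lemma update_eq_of_incompRel {β : Type*} {a x y : α} (hax : IncompRel (· ≤ ·) a x)
    (hy : y ≤ x ∨ x ≤ y) (h : α → β) (t : β) : Function.update h a t y = h y := by
  refine Function.update_of_ne ?_ t h
  rintro rfl
  exact hy.elim hax.1 hax.2

lemma isChainToTop_cons_iff {x u : α} {l : List α} (hl : l.head? = some u) :
    IsChainToTop (x :: l) ↔ x ⋖ u ∧ IsChainToTop l := by
  obtain ⟨l, rfl⟩ := List.head?_eq_some_iff.1 hl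
  simp [IsChainToTop, List.isChain_cons_cons, and_assoc]

lemma isChainFromBot_append_singleton_iff {x u : α} {l : List α} (hl : l.getLast? = some u) :
    IsChainFromBot (l ++ [x]) ↔ IsChainFromBot l ∧ u ⋖ x := by
  obtain ⟨l, rfl⟩ := List.getLast?_eq_some_iff.1 hl
  simp only [IsChainFromBot, List.append_assoc, List.cons_append, List.nil_append,
    List.isChain_append, List.isChain_cons_cons, List.IsChain.singleton, and_true, Option.mem_def,
    List.head?_cons, Option.some.injEq, forall_eq', List.head?_append, Option.or_some, true_and]
  tauto

lemma isChainFromBot_and_isChainToTop_split {v : α} {l₁ l₂ : List α} :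
    IsChainFromBot (l₁ ++ v :: l₂) ∧ IsChainToTop (l₁ ++ v :: l₂) ↔
      IsChainFromBot (l₁ ++ [v]) ∧ IsChainToTop (v :: l₂) := by
  rw [IsChainFromBot, IsChainToTop, IsChainFromBot, IsChainToTop, List.isChain_split]
  simp only [List.head?_append, List.head?_cons, Option.or_some, Option.mem_def, Option.some.injEq, forall_eq', List.getLast?_append,
    Option.or_eq_some_iff, List.getLast?_eq_none_iff, reduceCtorEq, false_and, or_false]
  tauto

end Chains

section ChainSums

noncomputable def upperSum (h : P → S) (x : P) : S :=
  ∑ l ∈ shortLists P, if IsChainToTop (x :: l) then chainWeight h l else 0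

noncomputable def lowerSum (h : P → S) (x : P) : S :=
  ∑ l ∈ shortLists P, if IsChainFromBot (l ++ [x]) then chainWeight h l else 0

lemma ncDeltaInv_eq_sum (h : P → S) (x : P) :
    ncDeltaInv h x = ∑ l ∈ shortLists P,
      if l.head? = some x ∧ IsChainToTop l then chainWeight h l else 0 := by
  unfold ncDeltaInv
  simp_rw [Finset.sum_filter]
  refine sum_range_sum_eq_sum_shortLists _ _ (by simp) fun k c => ?_
  simp only [IsChainToTop, satChain_iff_isChain_ofFn, head?_ofFn_succ, getLast?_ofFn_succ,
    chainWeight, List.map_ofFn, Option.mem_def, Option.some.injEq, forall_eq']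
  exact if_congr (by tauto) rfl rfl

lemma ncNablaInv_eq_sum (h : P → S) (x : P) :
    ncNablaInv h x = ∑ l ∈ shortLists P,
      if l.getLast? = some x ∧ IsChainFromBot l then chainWeight h l else 0 := by
  unfold ncNablaInv
  simp_rw [Finset.sum_filter]
  refine sum_range_sum_eq_sum_shortLists _ _ (by simp) fun k c => ?_
  simp only [IsChainFromBot, satChain_iff_isChain_ofFn, head?_ofFn_succ, getLast?_ofFn_succ,
    chainWeight, List.map_ofFn, Option.mem_def, Option.some.injEq, forall_eq']
  exact if_congr (by tauto) rfl rfl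

lemma ncDeltaInv_eq_upperSum_mul (h : P → S) (x : P) :
    ncDeltaInv h x = upperSum h x * h x := by
  rw [ncDeltaInv_eq_sum, sum_shortLists_head?_eq_some (fun l hl => length_le_card_of_isChain hl.1),
    upperSum, Finset.sum_mul]
  refine Finset.sum_congr rfl fun l _ => ?_
  split_ifs <;> simp

lemma ncNablaInv_eq_mul_lowerSum (h : P → S) (x : P) :
    ncNablaInv h x = h x * lowerSum h x := by
  rw [ncNablaInv_eq_sum,
    sum_shortLists_getLast?_eq_some (fun l hl => length_le_card_of_isChain hl.1), lowerSum,
    Finset.mul_sum]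
  refine Finset.sum_congr rfl fun l _ => ?_
  split_ifs <;> simp

lemma upperSum_eq_add_sum_ncDeltaInv (h : P → S) (x : P) :
    upperSum h x
      = (if IsMax x then 1 else 0) + ∑ u ∈ univ.filter (x ⋖ ·), ncDeltaInv h u := by
  rw [upperSum, sum_shortLists_eq_add_sum_head?, Finset.sum_filter]
  congr 1
  · simp [IsChainToTop]
  refine Finset.sum_congr rfl fun u _ => ?_
  rw [ncDeltaInv_eq_sum, ← Finset.sum_const_zero, ← Finset.sum_ite_irrel]
  refine Finset.sum_congr rfl fun l _ => ?_
  by_cases hl : l.head? = some u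
  · simp [hl, isChainToTop_cons_iff hl, ite_and]
  · simp [hl]

lemma lowerSum_eq_lSum_ncNablaInv (h : P → S) (x : P) : lowerSum h x = lSum (ncNablaInv h) x := by
  rw [lowerSum, lSum, sum_shortLists_eq_add_sum_getLast?, Finset.sum_filter]
  congr 1
  · simp [IsChainFromBot]
  refine Finset.sum_congr rfl fun u _ => ?_
  rw [ncNablaInv_eq_sum, ← Finset.sum_const_zero, ← Finset.sum_ite_irrel]
  refine Finset.sum_congr rfl fun l _ => ?_
  by_cases hl : l.getLast? = some u
  · rw [isChainFromBot_append_singleton_iff hl, and_comm]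
    simp [hl, ite_and]
  · simp [hl]

lemma tauDenom_eq_sum (h : P → S) (v : P) :
    tauDenom h v = ∑ l ∈ shortLists P, ∑ j ∈ range l.length,
      if l[j]? = some v ∧ IsChainFromBot l ∧ IsChainToTop l then
        chainWeight h (l.take j) * chainWeight h (l.drop j) else 0 := by
  unfold tauDenom
  simp_rw [Finset.sum_filter]
  refine sum_range_sum_eq_sum_shortLists _ _ (by simp) fun k c => ?_
  rw [List.length_ofFn, ← Fin.sum_univ_eq_sum_range, maxChain_iff_ofFn]
  split_ifs with hc
  · refine Finset.sum_congr rfl fun j _ => ?_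
    simp only [List.getElem?_ofFn, dif_pos j.2, Fin.eta, Option.some.injEq, hc, and_true,
      chainWeight, List.map_take, List.map_drop, List.map_ofFn]
  · exact (Finset.sum_eq_zero fun j _ => if_neg fun hj => hc hj.2).symm

lemma epsDenom_eq_sum (h : P → S) (v : P) :
    epsDenom h v = ∑ l ∈ shortLists P, ∑ j ∈ range l.length,
      if l[j]? = some v ∧ IsChainFromBot l ∧ IsChainToTop l then
        chainWeight h (l.take (j + 1)) * chainWeight h (l.drop (j + 1)) else 0 := by
  unfold epsDenom
  simp_rw [Finset.sum_filter]
  refine sum_range_sum_eq_sum_shortLists _ _ (by simp) fun k c => ?_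
  rw [List.length_ofFn, ← Fin.sum_univ_eq_sum_range, maxChain_iff_ofFn]
  split_ifs with hc
  · refine Finset.sum_congr rfl fun j _ => ?_
    simp only [List.getElem?_ofFn, dif_pos j.2, Fin.eta, Option.some.injEq, hc, and_true,
      chainWeight, List.map_take, List.map_drop, List.map_ofFn]
  · exact (Finset.sum_eq_zero fun j _ => if_neg fun hj => hc hj.2).symm

lemma tauDenom_eq_lowerSum_mul_upperSum_mul (h : P → S) (v : P) :
    tauDenom h v = lowerSum h v * upperSum h v * h v := by
  have hsplit : ∀ (l : List P) j,
      (if l[j]? = some v ∧ IsChainFromBot l ∧ IsChainToTop l then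
        chainWeight h (l.take j) * chainWeight h (l.drop j) else 0)
      = if l[j]? = some v ∧ IsChainFromBot l ∧ IsChainToTop l then
        chainWeight h (l.take j) * (chainWeight h (l.drop (j + 1)) * h v) else 0 := by
    intro l j
    split_ifs with hl
    · obtain ⟨hj, rfl⟩ := List.getElem?_eq_some_iff.1 hl.1
      rw [List.drop_eq_getElem_cons hj, chainWeight_cons]
    · rfl
  simp_rw [tauDenom_eq_sum, hsplit]
  rw [sum_shortLists_getElem?_eq_some (p := fun l => IsChainFromBot l ∧ IsChainToTop l)
    (fun l hl => length_le_card_of_isChain hl.1.1) v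
    fun l₁ l₂ => chainWeight h l₁ * (chainWeight h l₂ * h v), mul_assoc (lowerSum h v),
    lowerSum, upperSum, Finset.sum_mul (a := h v), Finset.sum_mul_sum]
  refine Finset.sum_congr rfl fun l₁ _ => Finset.sum_congr rfl fun l₂ _ => ?_
  by_cases h₁ : IsChainFromBot (l₁ ++ [v]) <;> by_cases h₂ : IsChainToTop (v :: l₂) <;>
    simp [isChainFromBot_and_isChainToTop_split, h₁, h₂]

lemma epsDenom_eq_mul_lowerSum_mul_upperSum (h : P → S) (v : P) :
    epsDenom h v = h v * lowerSum h v * upperSum h v := by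
  have hsplit : ∀ (l : List P) j,
      (if l[j]? = some v ∧ IsChainFromBot l ∧ IsChainToTop l then
        chainWeight h (l.take (j + 1)) * chainWeight h (l.drop (j + 1)) else 0)
      = if l[j]? = some v ∧ IsChainFromBot l ∧ IsChainToTop l then
        h v * chainWeight h (l.take j) * chainWeight h (l.drop (j + 1)) else 0 := by
    intro l j
    split_ifs with hl
    · rw [List.take_add_one, hl.1]
      simp
    · rfl
  simp_rw [epsDenom_eq_sum, hsplit]
  rw [sum_shortLists_getElem?_eq_some (p := fun l => IsChainFromBot l ∧ IsChainToTop l)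
    (fun l hl => length_le_card_of_isChain hl.1.1) v
    fun l₁ l₂ => h v * chainWeight h l₁ * chainWeight h l₂, lowerSum, upperSum,
    Finset.mul_sum (a := h v), Finset.sum_mul_sum]
  refine Finset.sum_congr rfl fun l₁ _ => Finset.sum_congr rfl fun l₂ _ => ?_
  by_cases h₁ : IsChainFromBot (l₁ ++ [v]) <;> by_cases h₂ : IsChainToTop (v :: l₂) <;>
    simp [isChainFromBot_and_isChainToTop_split, h₁, h₂, mul_assoc]

end ChainSums

section Locality

lemma upperSum_congr {h h' : P → S} {x : P} (hh : ∀ y, x < y → h y = h' y) :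
    upperSum h x = upperSum h' x := by
  refine Finset.sum_congr rfl fun l _ => ?_
  split_ifs with hl
  · refine chainWeight_congr fun y hy => hh y ?_
    exact (List.pairwise_cons.1 (List.isChain_iff_pairwise.1 (hl.1.imp fun _ _ => CovBy.lt))).1 y hy
  · rfl

lemma lowerSum_congr {h h' : P → S} {x : P} (hh : ∀ y, y < x → h y = h' y) :
    lowerSum h x = lowerSum h' x := by
  refine Finset.sum_congr rfl fun l _ => ?_
  split_ifs with hl
  · refine chainWeight_congr fun y hy => hh y ?_
    exact (List.pairwise_append.1 (List.isChain_iff_pairwise.1 (hl.1.imp fun _ _ => CovBy.lt))).2.2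
      y hy x (List.mem_singleton_self x)
  · rfl

lemma ncNablaInv_congr {h h' : P → S} {x : P} (hh : ∀ y, y ≤ x → h y = h' y) :
    ncNablaInv h x = ncNablaInv h' x := by
  rw [ncNablaInv_eq_mul_lowerSum, ncNablaInv_eq_mul_lowerSum, hh x le_rfl,
    lowerSum_congr fun y hy => hh y hy.le]

lemma tauDenom_update_of_incompRel {a x : P} (hax : IncompRel (· ≤ ·) a x) (h : P → S)
    (t : S) :
    tauDenom (Function.update h a t) x = tauDenom h x := by
  rw [tauDenom_eq_lowerSum_mul_upperSum_mul, tauDenom_eq_lowerSum_mul_upperSum_mul,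
    lowerSum_congr fun y hy => update_eq_of_incompRel hax (.inl hy.le) h t,
    upperSum_congr fun y hy => update_eq_of_incompRel hax (.inr hy.le) h t,
    update_eq_of_incompRel hax (.inl le_rfl) h t]

lemma epsDenom_update_of_incompRel {a x : P} (hax : IncompRel (· ≤ ·) a x) (h : P → S)
    (t : S) :
    epsDenom (Function.update h a t) x = epsDenom h x := by
  rw [epsDenom_eq_mul_lowerSum_mul_upperSum, epsDenom_eq_mul_lowerSum_mul_upperSum,
    lowerSum_congr fun y hy => update_eq_of_incompRel hax (.inl hy.le) h t,
    upperSum_congr fun y hy => update_eq_of_incompRel hax (.inr hy.le) h t,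
    update_eq_of_incompRel hax (.inl le_rfl) h t]

lemma ncDeltaInv_eq_of_forall_ne {F G : P → S} {v : P} {A : Set P}
    (hA : ∀ x, x ⋖ v → x ∈ A) (hFG : ∀ x ∉ A, x ≠ v → F x = G x)
    (hΔ : ∀ a ∈ A, ncDeltaInv F a = ncDeltaInv G a) :
    ∀ x ≠ v, ncDeltaInv F x = ncDeltaInv G x := by
  intro x
  induction x using WellFoundedGT.induction with
  | _ x ih =>
    intro hxv
    by_cases hxA : x ∈ A
    · exact hΔ x hxA
    rw [ncDeltaInv_eq_upperSum_mul, ncDeltaInv_eq_upperSum_mul, upperSum_eq_add_sum_ncDeltaInv,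
      upperSum_eq_add_sum_ncDeltaInv, hFG x hxA hxv]
    congr 2
    refine Finset.sum_congr rfl fun u hu => ?_
    have hxu : x ⋖ u := (Finset.mem_filter.1 hu).2
    exact ih u hxu.lt fun huv => hxA (hA x (huv ▸ hxu))

end Locality

section Antichains

lemma foldl_update_eq_of_pairwise {α β : Type*} {r : α → α → Prop} {F : (α → β) → α → β}
    (hF : ∀ h a t x, r a x → F (Function.update h a t) x = F h x) {l : List α}
    (hl : l.Pairwise r) (g : α → β) :
    l.foldl (fun h a => Function.update h a (F h a)) g
      = fun x => if x ∈ l then F g x else g x := by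
  induction l generalizing g with
  | nil => simp
  | cons a l ih =>
    obtain ⟨hal, hl⟩ := List.pairwise_cons.1 hl
    funext x
    rw [List.foldl_cons, ih hl]
    by_cases hx : x ∈ l
    · simp [hx, hF _ _ _ _ (hal x hx)]
    · by_cases hxa : x = a
      · subst hxa
        simp [hx]
      · simp [hx, hxa]

variable (C : S)

lemma ncTau_eq_update (v : P) (g : P → S) :
    ncTau C v g = Function.update g v (C * (tauDenom g v)⁻¹) := by
  funext x
  simp [ncTau, Function.update_apply]

lemma ncEps_eq_update (v : P) (g : P → S) :
    ncEps C v g = Function.update g v (C * (epsDenom g v)⁻¹) := by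
  funext x
  simp [ncEps, Function.update_apply]

lemma applyNCTaus_eq_of_pairwise {l : List P} (hl : l.Pairwise (IncompRel (· ≤ ·)))
    (g : P → S) :
    applyNCTaus C l g = fun x => if x ∈ l then C * (tauDenom g x)⁻¹ else g x := by
  simp only [applyNCTaus, ncTau_eq_update]
  exact foldl_update_eq_of_pairwise (fun h a t x hax => by rw [tauDenom_update_of_incompRel hax])
    hl g

lemma applyNCEpss_eq_of_pairwise {l : List P} (hl : l.Pairwise (IncompRel (· ≤ ·)))
    (g : P → S) :
    applyNCEpss C l g = fun x => if x ∈ l then C * (epsDenom g x)⁻¹ else g x := by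
  simp only [applyNCEpss, ncEps_eq_update]
  exact foldl_update_eq_of_pairwise (fun h a t x hax => by rw [epsDenom_update_of_incompRel hax])
    hl g

lemma tauDenom_ne_zero_of_ncTausDef {l : List P} (hl : l.Pairwise (IncompRel (· ≤ ·)))
    {g : P → S} (hdef : ncTausDef C l g) : ∀ y ∈ l, tauDenom g y ≠ 0 := by
  induction l generalizing g with
  | nil => simp
  | cons a l ih =>
    obtain ⟨hal, hl⟩ := List.pairwise_cons.1 hl
    rintro y (_ | ⟨_, hy⟩)
    · exact hdef.1
    · have := ih hl hdef.2 y hy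
      rwa [ncTau_eq_update, tauDenom_update_of_incompRel (hal y hy)] at this

lemma epsDenom_ne_zero_of_ncEpssDef {l : List P} (hl : l.Pairwise (IncompRel (· ≤ ·)))
    {g : P → S} (hdef : ncEpssDef C l g) : ∀ y ∈ l, epsDenom g y ≠ 0 := by
  induction l generalizing g with
  | nil => simp
  | cons a l ih =>
    obtain ⟨hal, hl⟩ := List.pairwise_cons.1 hl
    rintro y (_ | ⟨_, hy⟩)
    · exact hdef.1
    · have := ih hl hdef.2 y hy
      rwa [ncEps_eq_update, epsDenom_update_of_incompRel (hal y hy)] at this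

end Antichains

section Toggling

variable {C : S}

lemma mul_inv_mul_mul_inv_of_central (hC : ∀ s : S, C * s = s * C) (hC0 : C ≠ 0) (U X : S) :
    C * (U * (C * X⁻¹))⁻¹ = X * U⁻¹ := by
  simp only [mul_inv_rev, inv_inv]
  rw [← mul_assoc, ← mul_assoc, hC, mul_assoc X, mul_inv_cancel₀ hC0, mul_one]

lemma mul_inv_mul_inv_of_central (hC : ∀ s : S, C * s = s * C) (hC0 : C ≠ 0) (x : S) :
    C * (C * x⁻¹)⁻¹ = x := by
  simpa using mul_inv_mul_mul_inv_of_central hC hC0 1 x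

lemma uInvSum_ncTheta_ncDeltaInv (g : P → S) (v : P) :
    uInvSum C (ncTheta C (ncDeltaInv g)) v = upperSum g v * C⁻¹ := by
  simp [uInvSum, ncTheta, upperSum_eq_add_sum_ncDeltaInv, add_mul, Finset.sum_mul, mul_inv_rev]

lemma ncNablaInv_applyNCTaus {l : List P} (hl : l.Pairwise (IncompRel (· ≤ ·))) {g : P → S}
    (hdef : ncTausDef C l g) {u : P} (hu : u ∈ l) :
    ncNablaInv (applyNCTaus C l g) u = C * (ncDeltaInv g u)⁻¹ := by
  have hg := applyNCTaus_eq_of_pairwise C hl g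
  have hgu : applyNCTaus C l g u = C * (tauDenom g u)⁻¹ := by simp [hg, hu]
  have hbelow : ∀ y, y < u → applyNCTaus C l g y = g y := by
    intro y hy
    have hyl : y ∉ l := fun hyl => (hl.forall hyl hu hy.ne).1 hy.le
    simp [hg, hyl]
  have hL : lowerSum g u ≠ 0 := by
    have := tauDenom_ne_zero_of_ncTausDef C hl hdef u hu
    rw [tauDenom_eq_lowerSum_mul_upperSum_mul] at this
    exact left_ne_zero_of_mul (left_ne_zero_of_mul this)
  rw [ncNablaInv_eq_mul_lowerSum, lowerSum_congr hbelow, hgu, tauDenom_eq_lowerSum_mul_upperSum_mul,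
    ncDeltaInv_eq_upperSum_mul, mul_assoc (lowerSum g u), mul_inv_rev, mul_assoc, mul_assoc,
    inv_mul_cancel₀ hL, mul_one]

lemma ncDeltaInv_applyNCEpss (hC : ∀ s : S, C * s = s * C) {l : List P}
    (hl : l.Pairwise (IncompRel (· ≤ ·))) {g : P → S} (hdef : ncEpssDef C l g) {u : P}
    (hu : u ∈ l) : ncDeltaInv (applyNCEpss C l g) u = C * (ncNablaInv g u)⁻¹ := by
  have hg := applyNCEpss_eq_of_pairwise C hl g
  have hgu : applyNCEpss C l g u = C * (epsDenom g u)⁻¹ := by simp [hg, hu]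
  have habove : ∀ y, u < y → applyNCEpss C l g y = g y := by
    intro y hy
    have hyl : y ∉ l := fun hyl => (hl.forall hu hyl hy.ne).1 hy.le
    simp [hg, hyl]
  have hU : upperSum g u ≠ 0 := by
    have := epsDenom_ne_zero_of_ncEpssDef C hl hdef u hu
    rw [epsDenom_eq_mul_lowerSum_mul_upperSum] at this
    exact right_ne_zero_of_mul this
  rw [ncDeltaInv_eq_upperSum_mul, upperSum_congr habove, hgu, epsDenom_eq_mul_lowerSum_mul_upperSum,
    ncNablaInv_eq_mul_lowerSum, mul_inv_rev, ← mul_assoc, ← mul_assoc, ← hC, mul_assoc C,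
    mul_inv_cancel₀ hU, mul_one]

end Toggling

section Star

variable {C : S} {v : P} {lc : List P}

lemma applyNCTaus_append_singleton (l : List P) (g : P → S) :
    applyNCTaus C (l ++ [v]) g = ncTau C v (applyNCTaus C l g) := by
  simp [applyNCTaus]

lemma ncTausDef_of_append {l₁ l₂ : List P} {g : P → S} (h : ncTausDef C (l₁ ++ l₂) g) :
    ncTausDef C l₁ g := by
  induction l₁ generalizing g with
  | nil => trivial
  | cons a l ih => exact ⟨h.1, ih h.2⟩

lemma applyNCTaus_apply_of_not_lt (hlc : lc.Nodup ∧ ∀ y, y ∈ lc ↔ y ⋖ v) (g : P → S)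
    {y : P} (hy : ¬ y < v) : applyNCTaus C lc g y = g y := by
  have hyl : y ∉ lc := fun hyl => hy ((hlc.2 y).1 hyl).lt
  simp [applyNCTaus_eq_of_pairwise C (pairwise_incompRel_of_covBy hlc.1 fun y hy => (hlc.2 y).1 hy),
    hyl]

lemma lowerSum_applyNCTaus_of_covBy (hlc : lc.Nodup ∧ ∀ y, y ∈ lc ↔ y ⋖ v) {g : P → S}
    (hτ : ncTausDef C lc g) :
    lowerSum (applyNCTaus C lc g) v = lSum (ncTheta C (ncDeltaInv g)) v := by
  have hpw := pairwise_incompRel_of_covBy hlc.1 fun y hy => (hlc.2 y).1 hy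
  rw [lowerSum_eq_lSum_ncNablaInv, lSum, lSum]
  congr 1
  exact Finset.sum_congr rfl fun u hu =>
    ncNablaInv_applyNCTaus hpw hτ ((hlc.2 u).2 (Finset.mem_filter.1 hu).2)

lemma tauDenom_applyNCTaus_of_covBy (hlc : lc.Nodup ∧ ∀ y, y ∈ lc ↔ y ⋖ v) {g : P → S}
    (hτ : ncTausDef C lc g) :
    tauDenom (applyNCTaus C lc g) v = lSum (ncTheta C (ncDeltaInv g)) v * upperSum g v * g v := by
  rw [tauDenom_eq_lowerSum_mul_upperSum_mul, lowerSum_applyNCTaus_of_covBy hlc hτ,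
    upperSum_congr fun y hy => applyNCTaus_apply_of_not_lt hlc g (lt_asymm hy),
    applyNCTaus_apply_of_not_lt hlc g (lt_irrefl v)]

lemma epsDenom_applyNCTaus_of_covBy (hlc : lc.Nodup ∧ ∀ y, y ∈ lc ↔ y ⋖ v) {g : P → S}
    (hτ : ncTausDef C lc g) :
    epsDenom (applyNCTaus C lc g) v = g v * lSum (ncTheta C (ncDeltaInv g)) v * upperSum g v := by
  rw [epsDenom_eq_mul_lowerSum_mul_upperSum, lowerSum_applyNCTaus_of_covBy hlc hτ,
    upperSum_congr fun y hy => applyNCTaus_apply_of_not_lt hlc g (lt_asymm hy),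
    applyNCTaus_apply_of_not_lt hlc g (lt_irrefl v)]

lemma ncDeltaInv_applyNCEpss_update (hC : ∀ s : S, C * s = s * C) (hC0 : C ≠ 0)
    (hlc : lc.Nodup ∧ ∀ y, y ∈ lc ↔ y ⋖ v) {g : P → S} (hτ : ncTausDef C lc g) (t : S)
    (hε : ncEpssDef C lc.reverse (Function.update (applyNCTaus C lc g) v t)) :
    ncDeltaInv (applyNCEpss C lc.reverse (Function.update (applyNCTaus C lc g) v t))
      = Function.update (ncDeltaInv g) v (upperSum g v * t) := by
  have hcov : ∀ y ∈ lc, y ⋖ v := fun y hy => (hlc.2 y).1 hy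
  have hpw := pairwise_incompRel_of_covBy hlc.1 hcov
  have hpw' := pairwise_incompRel_of_covBy (List.nodup_reverse.2 hlc.1) fun y hy =>
    hcov y (List.mem_reverse.1 hy)
  set F := applyNCEpss C lc.reverse (Function.update (applyNCTaus C lc g) v t)
  have hF : ∀ y ∉ lc, F y = Function.update (applyNCTaus C lc g) v t y := by
    intro y hy
    simp [F, applyNCEpss_eq_of_pairwise C hpw', hy]
  have hFg : ∀ y ∉ lc, y ≠ v → F y = g y := by
    intro y hy hyv
    rw [hF y hy, Function.update_of_ne hyv]
    simp [applyNCTaus_eq_of_pairwise C hpw, hy]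
  have hΔlc : ∀ u ∈ lc, ncDeltaInv F u = ncDeltaInv g u := by
    intro u hu
    rw [ncDeltaInv_applyNCEpss hC hpw' hε (List.mem_reverse.2 hu),
      ncNablaInv_congr fun y hy => Function.update_of_ne (hy.trans_lt (hcov u hu).lt).ne _ _,
      ncNablaInv_applyNCTaus hpw hτ hu, mul_inv_mul_inv_of_central hC hC0]
  funext x
  by_cases hxv : x = v
  · subst hxv
    have hxlc : x ∉ lc := fun h => lt_irrefl x (hcov x h).lt
    rw [Function.update_self, ncDeltaInv_eq_upperSum_mul, hF x hxlc, Function.update_self,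
      upperSum_congr fun y hy => hFg y (fun h => lt_asymm hy (hcov y h).lt) hy.ne']
  · rw [Function.update_of_ne hxv]
    exact ncDeltaInv_eq_of_forall_ne (A := {y | y ∈ lc}) (fun y hy => (hlc.2 y).2 hy) hFg hΔlc
      x hxv

lemma ne_zero_of_ncODef {g : P → S} (hO : ncODef C v (ncTheta C (ncDeltaInv g))) :
    C ≠ 0 ∧ upperSum g v ≠ 0 := by
  have hU := hO.2.2.2
  rw [uInvSum_ncTheta_ncDeltaInv] at hU
  exact ⟨fun hC0 => by simp [hC0] at hU, left_ne_zero_of_mul hU⟩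

lemma ncTheta_ncDeltaInv_ncTstar (hC : ∀ s : S, C * s = s * C)
    (hlc : lc.Nodup ∧ ∀ y, y ∈ lc ↔ y ⋖ v) {g : P → S} (hτ : ncTausDef C (lc ++ [v]) g)
    (hε : ncEpssDef C lc.reverse (applyNCTaus C (lc ++ [v]) g))
    (hO : ncODef C v (ncTheta C (ncDeltaInv g))) :
    ncTheta C (ncDeltaInv (applyNCEpss C lc.reverse (applyNCTaus C (lc ++ [v]) g)))
      = ncT C v (ncTheta C (ncDeltaInv g)) := by
  obtain ⟨hC0, -⟩ := ne_zero_of_ncODef hO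
  have hτ' := ncTausDef_of_append hτ
  rw [applyNCTaus_append_singleton, ncTau_eq_update] at hε ⊢
  rw [ncDeltaInv_applyNCEpss_update hC hC0 hlc hτ' _ hε, tauDenom_applyNCTaus_of_covBy hlc hτ']
  funext x
  by_cases hxv : x = v
  · subst hxv
    rw [ncT, if_pos rfl, uInvSum_ncTheta_ncDeltaInv, ncTheta, ncTheta, Function.update_self,
      mul_inv_mul_mul_inv_of_central hC hC0, ncDeltaInv_eq_upperSum_mul]
    simp [mul_inv_rev, mul_assoc, hC0]
  · simp [ncTheta, ncT, hxv]

lemma ncTheta_ncDeltaInv_ncEstar (hC : ∀ s : S, C * s = s * C)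
    (hlc : lc.Nodup ∧ ∀ y, y ∈ lc ↔ y ⋖ v) {g : P → S} (hτ : ncTausDef C lc g)
    (hε : ncEpssDef C (v :: lc.reverse) (applyNCTaus C lc g))
    (hO : ncODef C v (ncTheta C (ncDeltaInv g))) :
    ncTheta C (ncDeltaInv (applyNCEpss C lc.reverse (ncEps C v (applyNCTaus C lc g))))
      = ncE C v (ncTheta C (ncDeltaInv g)) := by
  obtain ⟨hC0, hU⟩ := ne_zero_of_ncODef hO
  have hε' := hε.2
  rw [ncEps_eq_update] at hε' ⊢
  rw [ncDeltaInv_applyNCEpss_update hC hC0 hlc hτ _ hε', epsDenom_applyNCTaus_of_covBy hlc hτ]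
  funext x
  by_cases hxv : x = v
  · subst hxv
    rw [ncE, if_pos rfl, uInvSum_ncTheta_ncDeltaInv, ncTheta, ncTheta, Function.update_self,
      mul_inv_mul_mul_inv_of_central hC hC0, ncDeltaInv_eq_upperSum_mul]
    simp only [mul_inv_rev, inv_inv, mul_assoc, mul_inv_cancel₀ hU, inv_mul_cancel_left₀ hU,
      mul_one]
    rw [← mul_assoc C, hC, mul_assoc, mul_inv_cancel_left₀ hC0]
  · simp [ncTheta, ncE, hxv]

end Star

/-- `T_v*` applies the `τ`'s along `lc ++ [v]` and then the `ε`'s along `lc.reverse`; `E_v*`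
applies the `τ`'s along `lc` and then the `ε`'s along `v :: lc.reverse`. -/
theorem theta_deltaInv_ncTstar_ncEstar (C : S) (hC : ∀ s : S, C * s = s * C) (v : P)
    (lc : List P) (hlc : lc.Nodup ∧ ∀ y : P, y ∈ lc ↔ y ⋖ v) (g : P → S) :
    (ncTausDef C (lc ++ [v]) g →
     ncEpssDef C lc.reverse (applyNCTaus C (lc ++ [v]) g) →
     (∀ x : P,
        ncDeltaInv (applyNCEpss C lc.reverse (applyNCTaus C (lc ++ [v]) g)) x ≠ 0) →
     (∀ x : P, ncDeltaInv g x ≠ 0) →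
     ncODef C v (ncTheta C (ncDeltaInv g)) →
      ncTheta C (ncDeltaInv (applyNCEpss C lc.reverse (applyNCTaus C (lc ++ [v]) g)))
        = ncT C v (ncTheta C (ncDeltaInv g))) ∧
    (ncTausDef C lc g →
     ncEpssDef C (v :: lc.reverse) (applyNCTaus C lc g) →
     (∀ x : P,
        ncDeltaInv (applyNCEpss C lc.reverse (ncEps C v (applyNCTaus C lc g))) x ≠ 0) →
     (∀ x : P, ncDeltaInv g x ≠ 0) →
     ncODef C v (ncTheta C (ncDeltaInv g)) →
      ncTheta C (ncDeltaInv (applyNCEpss C lc.reverse (ncEps C v (applyNCTaus C lc g))))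
        = ncE C v (ncTheta C (ncDeltaInv g))) :=
  ⟨fun hτ hε _ _ hO => ncTheta_ncDeltaInv_ncTstar hC hlc hτ hε hO,
    fun hτ hε _ _ hO => ncTheta_ncDeltaInv_ncEstar hC hlc hτ hε hO⟩
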